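/- arXiv:1601.06055 — 3 statements merged into one kernel-verified Lean document; each statement's English description precedes it below -/
import Mathlib

section
/- Let P_{YZ|X} be a wiretap channel from finite X to finite Y × Z, let ε, δ ∈ [0,1] with ε + δ < 1, and consider any (M,ε,δ) secrecy code with induced joint PMF P_{XYZ} on X × Y × Z (marginalizing out W) and marginal P_{XZ}. Then for every channel Q_{Y|Z} from Z to Y and every real τ with 0 < τ < 1 − ε − δ: M · τ · β_{1−ε−δ−τ}(P_{XYZ}, P_{XZ} × Q_{Y|Z}) ≤ τ + δ, where (P_{XZ} × Q_{Y|Z})(x,y,z) := P_{XZ}(x,z)·Q_{Y|Z}(y|z). -/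
/-!
Write `W` for the message. Test `P_{XYZ}` against `P_{XZ} Q_{Y|Z}` with
`t(x, y, z) = E[1{g(y) = W} · u(W, z) | X = x]`, where `u = min(1, c P_W P_Z / P_{WZ})` and
`c = (τ + δ) / τ`. Under `P_{XYZ}` the test accepts unless decoding fails (probability `≤ ε`)
or the truncation `u` rejects, which costs at most `∑ (P_{WZ} - P_W P_Z)⁺ = d(P_{WZ}, P_W P_Z) ≤ δ`.
Under `P_{XZ} Q_{Y|Z}` the output `Y` is independent of `W` given `Z`, so the acceptance
probability is `∑_{w,z} Q(g⁻¹(w) | z) P_{WZ}(w, z) u(w, z) ≤ c ∑_z P_Z(z) / M = c / M`.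
Hence `β_{1-ε-δ-τ} ≤ (τ + δ) / (M τ)`.
-/

open scoped Classical
open Finset

noncomputable section

def IsPMF {A : Type*} [Fintype A] (P : A → ℝ) : Prop :=
  (∀ a, 0 ≤ P a) ∧ ∑ a, P a = 1

def dTV {A : Type*} [Fintype A] (P Q : A → ℝ) : ℝ :=
  (1 / 2) * ∑ a, |P a - Q a|

def betaHT {A : Type*} [Fintype A] (α : ℝ) (P Q : A → ℝ) : ℝ :=
  sInf {b : ℝ | ∃ t : A → ℝ, (∀ a, 0 ≤ t a ∧ t a ≤ 1) ∧
    α ≤ ∑ a, P a * t a ∧ b = ∑ a, Q a * t a}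

lemma betaHT_le_sum_mul {A : Type*} [Fintype A] {α : ℝ} {P Q t : A → ℝ}
    (hQ : ∀ a, 0 ≤ Q a) (ht : ∀ a, 0 ≤ t a ∧ t a ≤ 1) (hα : α ≤ ∑ a, P a * t a) :
    betaHT α P Q ≤ ∑ a, Q a * t a :=
  csInf_le ⟨0, by rintro _ ⟨s, hs, -, rfl⟩; exact sum_nonneg fun a _ => mul_nonneg (hQ a) (hs a).1⟩
    ⟨t, ht, hα, rfl⟩

lemma sum_max_sub_zero_eq_dTV {A : Type*} [Fintype A] {P Q : A → ℝ}
    (h : ∑ a, P a = ∑ a, Q a) : ∑ a, max (P a - Q a) 0 = dTV P Q := by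
  have hmax : ∀ r : ℝ, max r 0 = (r + |r|) / 2 := fun r => by
    rcases le_total 0 r with hr | hr
    · rw [max_eq_left hr, abs_of_nonneg hr]; ring
    · rw [max_eq_right hr, abs_of_nonpos hr]; ring
  simp only [hmax, ← sum_div, sum_add_distrib, sum_sub_distrib, h, dTV]
  ring

-- Scaling `p` by `truncRatio c p q` caps it at `c * q` (`mul_truncRatio`); this also covers the
-- junk value `c * q / 0 = 0`.
def truncRatio (c p q : ℝ) : ℝ := min 1 (c * q / p)

lemma truncRatio_le_one (c p q : ℝ) : truncRatio c p q ≤ 1 := min_le_left _ _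

lemma truncRatio_nonneg {c p q : ℝ} (hp : 0 ≤ p) (hcq : 0 ≤ c * q) : 0 ≤ truncRatio c p q :=
  le_min zero_le_one (div_nonneg hcq hp)

lemma mul_truncRatio {c p q : ℝ} (hp : 0 ≤ p) (hcq : 0 ≤ c * q) :
    p * truncRatio c p q = min p (c * q) := by
  rcases hp.eq_or_lt with rfl | hp
  · simp [hcq]
  · rw [truncRatio, mul_min_of_nonneg _ _ hp.le, mul_one, mul_div_cancel₀ _ hp.ne']

lemma sum_sub_dTV_le_sum_mul_truncRatio {A : Type*} [Fintype A] {c : ℝ} {P Q : A → ℝ}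
    (hc : 1 ≤ c) (hP : ∀ a, 0 ≤ P a) (hQ : ∀ a, 0 ≤ Q a) (h : ∑ a, P a = ∑ a, Q a) :
    ∑ a, P a - dTV P Q ≤ ∑ a, P a * truncRatio c (P a) (Q a) := by
  rw [← sum_max_sub_zero_eq_dTV h, ← sum_sub_distrib]
  gcongr with a
  have hQc : Q a ≤ c * Q a := le_mul_of_one_le_left (hQ a) hc
  rw [mul_truncRatio (hP a) (by linarith [hQ a])]
  rcases le_total (P a) (c * Q a) with h | h
  · rw [min_eq_left h]; linarith [le_max_right (P a - Q a) 0]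
  · rw [min_eq_right h]; linarith [le_max_left (P a - Q a) 0]

section CondMean

variable {ι X B : Type*} [Fintype ι]

-- `E[φ(W, b) | X = x]` when `π` is the joint law of `(W, X)`; it is `0` where `X = x` has no mass.
def condMean (π : ι → X → ℝ) (φ : ι → B → ℝ) (x : X) (b : B) : ℝ :=
  (∑ i, π i x * φ i b) / ∑ i, π i x

variable {π : ι → X → ℝ} {φ : ι → B → ℝ}

lemma sum_mul_condMean {x : X} (hπ : ∀ i, 0 ≤ π i x) (b : B) :
    (∑ i, π i x) * condMean π φ x b = ∑ i, π i x * φ i b := by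
  rcases (sum_nonneg fun i _ => hπ i).eq_or_lt with h | h
  · have hzero := (sum_eq_zero_iff_of_nonneg fun i _ => hπ i).1 h.symm
    rw [← h, zero_mul]
    exact (sum_eq_zero fun i hi => by rw [hzero i hi, zero_mul]).symm
  · exact mul_div_cancel₀ _ h.ne'

lemma condMean_mem_Icc (hπ : ∀ i x, 0 ≤ π i x) (hφ : ∀ i b, 0 ≤ φ i b ∧ φ i b ≤ 1)
    (x : X) (b : B) : 0 ≤ condMean π φ x b ∧ condMean π φ x b ≤ 1 :=
  ⟨div_nonneg (sum_nonneg fun i _ => mul_nonneg (hπ i x) (hφ i b).1)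
      (sum_nonneg fun i _ => hπ i x),
    div_le_one_of_le₀ (sum_le_sum fun i _ => mul_le_of_le_one_right (hπ i x) (hφ i b).2)
      (sum_nonneg fun i _ => hπ i x)⟩

lemma sum_sum_mul_condMean [Fintype X] [Fintype B] (hπ : ∀ i x, 0 ≤ π i x) (K : X → B → ℝ) :
    ∑ x, ∑ b, (∑ i, π i x) * K x b * condMean π φ x b = ∑ i, ∑ x, ∑ b, π i x * K x b * φ i b := by
  calc ∑ x, ∑ b, (∑ i, π i x) * K x b * condMean π φ x b
      = ∑ x, ∑ b, ∑ i, π i x * K x b * φ i b := by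
        refine sum_congr rfl fun x _ => sum_congr rfl fun b _ => ?_
        rw [mul_right_comm, sum_mul_condMean (hπ · x), sum_mul]
        exact sum_congr rfl fun i _ => by ring
    _ = ∑ i, ∑ x, ∑ b, π i x * K x b * φ i b :=
        (sum_congr rfl fun x _ => sum_comm).trans sum_comm

end CondMean

section JointWZ

variable {ι X Y Z : Type*} [Fintype X] [Fintype Y] {π : ι → X → ℝ} {K : X → Y × Z → ℝ}

-- The law of `(W, Z)` when `(W, X)` has law `π` and `(Y, Z)` is the output of `K` on input `X`.
def jointWZ (π : ι → X → ℝ) (K : X → Y × Z → ℝ) (p : ι × Z) : ℝ :=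
  ∑ x, π p.1 x * ∑ y, K x (y, p.2)

lemma jointWZ_nonneg (hπ : ∀ i x, 0 ≤ π i x) (hK : ∀ x b, 0 ≤ K x b) (p : ι × Z) :
    0 ≤ jointWZ π K p :=
  sum_nonneg fun x _ => mul_nonneg (hπ p.1 x) (sum_nonneg fun _ _ => hK x _)

lemma sum_jointWZ [Fintype ι] [Fintype Z] (hK : ∀ x, IsPMF (K x)) :
    ∑ p, jointWZ π K p = ∑ i, ∑ x, π i x := by
  simp only [jointWZ, Fintype.sum_prod_type, mul_sum]
  refine sum_congr rfl fun i _ => ?_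
  rw [sum_comm]
  refine sum_congr rfl fun x _ => ?_
  rw [← Fintype.sum_prod_type_right (f := fun b => π i x * K x b), ← mul_sum, (hK x).2, mul_one]

end JointWZ

section DecodingTest

variable {ι X Y Z : Type*} [Fintype ι] [DecidableEq ι]

def decodingTest (π : ι → X → ℝ) (g : Y → ι) (u : ι → Z → ℝ) (p : X × Y × Z) : ℝ :=
  condMean π (fun i b => if g b.1 = i then u i b.2 else 0) p.1 p.2

variable {π : ι → X → ℝ} {g : Y → ι} {u : ι → Z → ℝ}

lemma decodingTest_mem_Icc (hπ : ∀ i x, 0 ≤ π i x) (hu : ∀ i z, 0 ≤ u i z ∧ u i z ≤ 1)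
    (p : X × Y × Z) : 0 ≤ decodingTest π g u p ∧ decodingTest π g u p ≤ 1 :=
  condMean_mem_Icc hπ (fun i b => by split_ifs <;> simp [hu]) p.1 p.2

variable [Fintype X] [Fintype Y] [Fintype Z] {K : X → Y × Z → ℝ}

lemma sum_sub_sum_le_sum_mul_decodingTest (hπ : ∀ i x, 0 ≤ π i x) (hK : ∀ x, IsPMF (K x))
    (hu : ∀ i z, u i z ≤ 1) :
    ∑ i, ∑ z, jointWZ π K (i, z) * u i z
        - ∑ i, ∑ x, ∑ b, π i x * K x b * (if g b.1 = i then 0 else 1)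
      ≤ ∑ x, ∑ b, (∑ i, π i x) * K x b * decodingTest π g u (x, b) := by
  have hsplit : ∀ i, ∑ z, jointWZ π K (i, z) * u i z = ∑ x, ∑ b, π i x * K x b * u i b.2 :=
    fun i => by
      simp only [jointWZ, Fintype.sum_prod_type_right (f := fun b => _ * K _ b * u i b.2),
        mul_sum, sum_mul]
      exact sum_comm
  simp only [decodingTest, sum_sum_mul_condMean hπ, hsplit, ← sum_sub_distrib, ← mul_sub]
  gcongr with i _ x _ b
  · exact mul_nonneg (hπ i x) ((hK x).1 b)
  · split_ifs <;> linarith [hu i b.2]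

lemma one_sub_sub_le_sum_mul_decodingTest (hπ : ∀ i x, 0 ≤ π i x)
    (hπ1 : ∑ i, ∑ x, π i x = 1) (hK : ∀ x, IsPMF (K x)) {PXYZ : X × Y × Z → ℝ}
    (hPXYZ : ∀ p, PXYZ p = (∑ i, π i p.1) * K p.1 p.2) {c : ℝ} (hc : 1 ≤ c)
    {q : ι × Z → ℝ} (hq : ∀ p, 0 ≤ q p) (hq1 : ∑ p, q p = 1) {ε δ : ℝ}
    (herr : ∑ i, ∑ x, ∑ b, π i x * K x b * (if g b.1 = i then 0 else 1) ≤ ε)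
    (hsec : dTV (jointWZ π K) q ≤ δ) :
    1 - ε - δ ≤ ∑ p, PXYZ p *
      decodingTest π g (fun i z => truncRatio c (jointWZ π K (i, z)) (q (i, z))) p := by
  have hdecode := sum_sub_sum_le_sum_mul_decodingTest hπ hK (g := g)
    fun i z => truncRatio_le_one c (jointWZ π K (i, z)) (q (i, z))
  have htrunc := sum_sub_dTV_le_sum_mul_truncRatio hc (jointWZ_nonneg hπ fun x => (hK x).1) hq
    (by rw [sum_jointWZ hK, hπ1, hq1])
  rw [sum_jointWZ hK, hπ1, Fintype.sum_prod_type] at htrunc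
  rw [Fintype.sum_prod_type]
  simp only [hPXYZ]
  linarith

lemma sum_mul_decodingTest_le (hπ : ∀ i x, 0 ≤ π i x) {PXYZ : X × Y × Z → ℝ}
    (hPXYZ : ∀ p, PXYZ p = (∑ i, π i p.1) * K p.1 p.2) {PXZ : X × Z → ℝ}
    (hPXZ : ∀ p, PXZ p = ∑ y, PXYZ (p.1, y, p.2)) {Q : Z → Y → ℝ} (hQ : ∀ z, IsPMF (Q z))
    {C : Z → ℝ} (hC : ∀ i z, jointWZ π K (i, z) * u i z ≤ C z) :
    ∑ p, PXZ (p.1, p.2.2) * Q p.2.2 p.2.1 * decodingTest π g u p ≤ ∑ z, C z := by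
  have hcollapse : ∀ b : Y × Z, ∑ i, ∑ x, π i x * ((∑ y, K x (y, b.2)) * Q b.2 b.1)
        * (if g b.1 = i then u i b.2 else 0)
      = Q b.2 b.1 * (jointWZ π K (g b.1, b.2) * u (g b.1) b.2) := fun b => by
    rw [Fintype.sum_eq_single (g b.1) fun i hi => by simp [Ne.symm hi]]
    simp only [↓reduceIte, jointWZ, mul_sum, sum_mul]
    exact sum_congr rfl fun x _ => sum_congr rfl fun y _ => by ring
  calc ∑ p, PXZ (p.1, p.2.2) * Q p.2.2 p.2.1 * decodingTest π g u p
      = ∑ x, ∑ b : Y × Z, (∑ i, π i x) * ((∑ y, K x (y, b.2)) * Q b.2 b.1)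
          * decodingTest π g u (x, b) := by
        rw [Fintype.sum_prod_type]
        refine sum_congr rfl fun x _ => sum_congr rfl fun b _ => ?_
        simp only [hPXZ, hPXYZ, ← mul_sum]
        ring
    _ = ∑ i, ∑ x, ∑ b : Y × Z, π i x * ((∑ y, K x (y, b.2)) * Q b.2 b.1)
          * (if g b.1 = i then u i b.2 else 0) := sum_sum_mul_condMean hπ _
    _ = ∑ b : Y × Z, ∑ i, ∑ x, π i x * ((∑ y, K x (y, b.2)) * Q b.2 b.1)
          * (if g b.1 = i then u i b.2 else 0) :=
        (sum_congr rfl fun i _ => sum_comm).trans sum_comm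
    _ ≤ ∑ b : Y × Z, Q b.2 b.1 * C b.2 := by
        simp only [hcollapse]
        gcongr with b
        · exact (hQ b.2).1 b.1
        · exact hC _ _
    _ = ∑ z, C z := by
        simp only [Fintype.sum_prod_type_right, ← sum_mul, (hQ _).2, one_mul]

-- The reference law `(i, z) ↦ r z` of `(W, Z)` ignores `i`, as `P_W P_Z` does for uniform `W`.
lemma betaHT_le_mul_sum (hπ : ∀ i x, 0 ≤ π i x) (hπ1 : ∑ i, ∑ x, π i x = 1)
    (hK : ∀ x, IsPMF (K x)) {PXYZ : X × Y × Z → ℝ}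
    (hPXYZ : ∀ p, PXYZ p = (∑ i, π i p.1) * K p.1 p.2) {PXZ : X × Z → ℝ}
    (hPXZ : ∀ p, PXZ p = ∑ y, PXYZ (p.1, y, p.2)) {Q : Z → Y → ℝ} (hQ : ∀ z, IsPMF (Q z))
    {r : Z → ℝ} (hr : IsPMF fun p : ι × Z => r p.2) {ε δ α c : ℝ}
    (herr : ∑ i, ∑ x, ∑ b, π i x * K x b * (if g b.1 = i then 0 else 1) ≤ ε)
    (hsec : dTV (jointWZ π K) (fun p => r p.2) ≤ δ) (hα : α ≤ 1 - ε - δ) (hc : 1 ≤ c) :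
    betaHT α PXYZ (fun p => PXZ (p.1, p.2.2) * Q p.2.2 p.2.1) ≤ c * ∑ z, r z := by
  have hjoint := jointWZ_nonneg hπ fun x => (hK x).1
  have hPXZ0 : ∀ p, 0 ≤ PXZ p := fun p => (hPXZ p).symm ▸ sum_nonneg fun y _ =>
    (hPXYZ _).symm ▸ mul_nonneg (sum_nonneg fun i _ => hπ i _) ((hK _).1 _)
  have hcr : ∀ p : ι × Z, 0 ≤ c * r p.2 := fun p => mul_nonneg (by linarith) (hr.1 p)
  refine (betaHT_le_sum_mul (fun p => mul_nonneg (hPXZ0 _) ((hQ _).1 _))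
    (decodingTest_mem_Icc hπ fun i z => ⟨truncRatio_nonneg (hjoint _) (hcr (i, z)),
      truncRatio_le_one _ _ _⟩)
    (hα.trans (one_sub_sub_le_sum_mul_decodingTest hπ hπ1 hK hPXYZ hc hr.1 hr.2 herr
      hsec))).trans ?_
  rw [mul_sum]
  refine sum_mul_decodingTest_le hπ hPXYZ hPXZ hQ fun i z => ?_
  rw [mul_truncRatio (hjoint _) (hcr (i, z))]
  exact min_le_right _ _

end DecodingTest

lemma sum_sum_inv_mul_eq_one {X : Type*} [Fintype X] {M : ℕ} (hM : 0 < M)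
    {enc : Fin M → X → ℝ} (henc : ∀ m, IsPMF (enc m)) : ∑ m, ∑ x, (M : ℝ)⁻¹ * enc m x = 1 := by
  simp only [← mul_sum, (henc _).2, mul_one, sum_const, card_univ, Fintype.card_fin, nsmul_eq_mul]
  exact mul_inv_cancel₀ (Nat.cast_ne_zero.2 hM.ne')

theorem stmt3_general {X Y Z : Type*} [Fintype X] [Fintype Y] [Fintype Z]
    (Wch : X → Y × Z → ℝ) (hW : ∀ x, IsPMF (Wch x))
    (M : ℕ) (hM : 0 < M)
    (ε δ : ℝ) (hδ0 : 0 ≤ δ)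
    (enc : Fin M → X → ℝ) (henc : ∀ m, IsPMF (enc m))
    (g : Y → Fin M)
    (PXYZ : X × Y × Z → ℝ)
    (hPXYZ : ∀ p, PXYZ p = (∑ m, ((M : ℝ))⁻¹ * enc m p.1) * Wch p.1 p.2)
    (PXZ : X × Z → ℝ)
    (hPXZ : ∀ p, PXZ p = ∑ y, PXYZ (p.1, y, p.2))
    (PWZ : Fin M × Z → ℝ)
    (hPWZ : ∀ p, PWZ p = ((M : ℝ))⁻¹ * ∑ x, enc p.1 x * ∑ y, Wch x (y, p.2))
    (PZ : Z → ℝ) (hPZ : ∀ z, PZ z = ∑ m, PWZ (m, z))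
    (hrel : ∑ m, ∑ x, ∑ p : Y × Z,
        ((M : ℝ))⁻¹ * enc m x * Wch x p * (if g p.1 = m then 0 else 1) ≤ ε)
    (hsec : dTV PWZ (fun p => ((M : ℝ))⁻¹ * PZ p.2) ≤ δ) :
    ∀ QYgZ : Z → Y → ℝ, (∀ z, IsPMF (QYgZ z)) →
      ∀ τ : ℝ, 0 < τ → τ < 1 - ε - δ →
        (M : ℝ) * τ * betaHT (1 - ε - δ - τ) PXYZ
            (fun p : X × Y × Z => PXZ (p.1, p.2.2) * QYgZ p.2.2 p.2.1)
          ≤ τ + δ := by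
  intro Q hQ τ hτ hτε
  set π : Fin M → X → ℝ := fun m x => (M : ℝ)⁻¹ * enc m x
  have hπ : ∀ m x, 0 ≤ π m x := fun m x => mul_nonneg (by positivity) ((henc m).1 x)
  have hπ1 : ∑ m, ∑ x, π m x = 1 := sum_sum_inv_mul_eq_one hM henc
  obtain rfl : jointWZ π Wch = PWZ := funext fun p => by
    simp only [hPWZ, jointWZ, π, mul_sum, mul_assoc]
  have hPZ' : IsPMF PZ := by
    refine ⟨fun z => (hPZ z).symm ▸ sum_nonneg fun m _ => ?_, ?_⟩
    · exact jointWZ_nonneg hπ (fun x => (hW x).1) _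
    · simp only [hPZ]
      rw [sum_comm, ← Fintype.sum_prod_type, sum_jointWZ hW, hπ1]
  have hr : IsPMF fun p : Fin M × Z => (M : ℝ)⁻¹ * PZ p.2 :=
    ⟨fun p => mul_nonneg (by positivity) (hPZ'.1 p.2), by
      rw [Fintype.sum_prod_type]; exact sum_sum_inv_mul_eq_one hM fun _ => hPZ'⟩
  have hc : 1 ≤ (τ + δ) / τ := by rw [le_div_iff₀ hτ]; linarith
  have hβ := betaHT_le_mul_sum (r := fun z => (M : ℝ)⁻¹ * PZ z) hπ hπ1 hW hPXYZ hPXZ hQ hr hrel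
    hsec (by linarith : 1 - ε - δ - τ ≤ 1 - ε - δ) hc
  rw [← mul_sum, hPZ'.2, mul_one] at hβ
  calc (M : ℝ) * τ * betaHT (1 - ε - δ - τ) PXYZ
          (fun p : X × Y × Z => PXZ (p.1, p.2.2) * Q p.2.2 p.2.1)
      ≤ M * τ * ((τ + δ) / τ * (M : ℝ)⁻¹) := by gcongr
    _ = τ + δ := by field_simp

/-- Converse bound (Theorem 3): every `(M,ε,δ)` secrecy code satisfies
`M τ β_{1-ε-δ-τ}(P_{XYZ}, P_{XZ} Q_{Y|Z}) ≤ τ + δ` for every channel `Q_{Y|Z}`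
and every `0 < τ < 1 - ε - δ`. -/
theorem stmt3 {X Y Z : Type*} [Fintype X] [Fintype Y] [Fintype Z]
    [Nonempty X] [Nonempty Y] [Nonempty Z]
    (Wch : X → Y × Z → ℝ) (hW : ∀ x, IsPMF (Wch x))
    (M : ℕ) (hM : 0 < M)
    (ε δ : ℝ) (hε0 : 0 ≤ ε) (hε1 : ε ≤ 1) (hδ0 : 0 ≤ δ) (hδ1 : δ ≤ 1)
    (hεδ : ε + δ < 1)
    (enc : Fin M → X → ℝ) (henc : ∀ m, IsPMF (enc m))
    (g : Y → Fin M)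
    (PXYZ : X × Y × Z → ℝ)
    (hPXYZ : ∀ p, PXYZ p = (∑ m, ((M : ℝ))⁻¹ * enc m p.1) * Wch p.1 p.2)
    (PXZ : X × Z → ℝ)
    (hPXZ : ∀ p, PXZ p = ∑ y, PXYZ (p.1, y, p.2))
    (PWZ : Fin M × Z → ℝ)
    (hPWZ : ∀ p, PWZ p = ((M : ℝ))⁻¹ * ∑ x, enc p.1 x * ∑ y, Wch x (y, p.2))
    (PZ : Z → ℝ) (hPZ : ∀ z, PZ z = ∑ m, PWZ (m, z))
    (hrel : ∑ m, ∑ x, ∑ p : Y × Z,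
        ((M : ℝ))⁻¹ * enc m x * Wch x p * (if g p.1 = m then 0 else 1) ≤ ε)
    (hsec : dTV PWZ (fun p => ((M : ℝ))⁻¹ * PZ p.2) ≤ δ) :
    ∀ QYgZ : Z → Y → ℝ, (∀ z, IsPMF (QYgZ z)) →
      ∀ τ : ℝ, 0 < τ → τ < 1 - ε - δ →
        (M : ℝ) * τ * betaHT (1 - ε - δ - τ) PXYZ
            (fun p : X × Y × Z => PXZ (p.1, p.2.2) * QYgZ p.2.2 p.2.1)
          ≤ τ + δ :=
  stmt3_general Wch hW M hM ε δ hδ0 enc henc g PXYZ hPXYZ PXZ hPXZ PWZ hPWZ PZ hPZ hrel hsec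
end
end

section
/- Let W be a finite set of cardinality M, Z a finite set, and P_{WZ} a joint PMF on W × Z whose W-marginal P_W is the uniform distribution on W; let P_Z be its Z-marginal. Then for every η ∈ (0,1), the event A_η := {(w,z) : M·η·P_{WZ}(w,z) ≥ P_Z(z)} satisfies P_{WZ}(A_η) ≤ d(P_{WZ}, P_W × P_Z)/(1 − η). -/
open scoped Classical
open Finset

noncomputable section

section TotalVariation

variable {A : Type*} [Fintype A] {P Q : A → ℝ}

/-- Since `∑ (P - Q) = 0`, the positive and negative parts of `P - Q` have equal mass. -/
theorem dTV_eq_sum_posPart (h : ∑ a, P a = ∑ a, Q a) :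
    dTV P Q = ∑ a, (P a - Q a)⁺ := by
  have hneg : ∑ a, (P a - Q a)⁻ = ∑ a, (P a - Q a)⁺ := by
    have hzero : ∑ a, ((P a - Q a)⁺ - (P a - Q a)⁻) = 0 := by
      simp only [posPart_sub_negPart, sum_sub_distrib, h, sub_self]
    rw [sum_sub_distrib] at hzero
    linarith
  simp only [dTV, ← posPart_add_negPart, sum_add_distrib, hneg]
  ring

theorem sum_sub_le_dTV (h : ∑ a, P a = ∑ a, Q a) (E : Finset A) :
    ∑ a ∈ E, (P a - Q a) ≤ dTV P Q :=
  calc ∑ a ∈ E, (P a - Q a)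
      ≤ ∑ a ∈ E, (P a - Q a)⁺ := sum_le_sum fun _ _ => le_posPart _
    _ ≤ ∑ a, (P a - Q a)⁺ := sum_le_univ_sum_of_nonneg fun _ => posPart_nonneg _
    _ = dTV P Q := (dTV_eq_sum_posPart h).symm

theorem sum_le_dTV_div_of_le_mul {η : ℝ} (hη : η < 1) (h : ∑ a, P a = ∑ a, Q a)
    {E : Finset A} (hE : ∀ a ∈ E, Q a ≤ η * P a) :
    ∑ a ∈ E, P a ≤ dTV P Q / (1 - η) := by
  rw [le_div_iff₀ (sub_pos.mpr hη)]
  calc (∑ a ∈ E, P a) * (1 - η)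
      = ∑ a ∈ E, (P a - η * P a) := by rw [sum_mul]; exact sum_congr rfl fun _ _ => by ring
    _ ≤ ∑ a ∈ E, (P a - Q a) := sum_le_sum fun a ha => by linarith [hE a ha]
    _ ≤ dTV P Q := sum_sub_le_dTV h E

end TotalVariation

theorem sum_inv_card_mul_marginal {W Z : Type*} [Fintype W] [Fintype Z] [Nonempty W]
    (P : W × Z → ℝ) :
    ∑ p : W × Z, ((Fintype.card W : ℝ))⁻¹ * ∑ w, P (w, p.2) = ∑ p, P p := by
  have hcard : (Fintype.card W : ℝ) ≠ 0 := Nat.cast_ne_zero.mpr Fintype.card_ne_zero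
  rw [Fintype.sum_prod_type, Fintype.sum_prod_type]
  dsimp only
  rw [sum_const, card_univ, nsmul_eq_mul, ← mul_sum, ← mul_assoc, mul_inv_cancel₀ hcard,
    one_mul, sum_comm]

theorem stmt12_general {W Z : Type*} [Fintype W] [Fintype Z] [Nonempty W]
    (M : ℕ) (hM : Fintype.card W = M)
    (PWZ : W × Z → ℝ)
    (PZ : Z → ℝ) (hPZ : ∀ z, PZ z = ∑ w, PWZ (w, z))
    (η : ℝ) (hη1 : η < 1) :
    ∑ p ∈ Finset.univ.filter (fun p : W × Z => PZ p.2 ≤ (M : ℝ) * η * PWZ p), PWZ p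
      ≤ dTV PWZ (fun p : W × Z => ((M : ℝ))⁻¹ * PZ p.2) / (1 - η) := by
  subst hM
  have hcard : (0 : ℝ) < Fintype.card W := Nat.cast_pos.mpr Fintype.card_pos
  refine sum_le_dTV_div_of_le_mul hη1 ?_ fun p hp => ?_
  · simp only [hPZ, sum_inv_card_mul_marginal]
  · rw [inv_mul_le_iff₀ hcard, ← mul_assoc]
    exact (mem_filter.mp hp).2

/-- Eq. (65): if the `W`-marginal of `P_{WZ}` is uniform on a set of size `M`,
then for every `η ∈ (0,1)` the event `A_η = {(w,z) : M η P_{WZ}(w,z) ≥ P_Z(z)}`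
satisfies `P_{WZ}(A_η) ≤ d(P_{WZ}, P_W P_Z)/(1-η)`. -/
theorem stmt12 {W Z : Type*} [Fintype W] [Fintype Z] [Nonempty W] [Nonempty Z]
    (M : ℕ) (hM : Fintype.card W = M)
    (PWZ : W × Z → ℝ) (hP : IsPMF PWZ)
    (hunif : ∀ w, ∑ z, PWZ (w, z) = ((M : ℝ))⁻¹)
    (PZ : Z → ℝ) (hPZ : ∀ z, PZ z = ∑ w, PWZ (w, z))
    (η : ℝ) (hη0 : 0 < η) (hη1 : η < 1) :
    ∑ p ∈ Finset.univ.filter (fun p : W × Z => PZ p.2 ≤ (M : ℝ) * η * PWZ p), PWZ p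
      ≤ dTV PWZ (fun p : W × Z => ((M : ℝ))⁻¹ * PZ p.2) / (1 - η) :=
  stmt12_general M hM PWZ PZ hPZ η hη1
end
end

section
/- Let X and Z be finite nonempty sets, P_{Z|X} a channel from X to Z, P_X a PMF on X, Q_Z a PMF on Z, and γ > 0. Then E_γ(P_X × P_{Z|X}, P_X × Q_Z) = Σ_{x∈X} P_X(x)·E_γ(P_{Z|X=x}, Q_Z), and consequently E_γ(P_X × P_{Z|X}, P_X × Q_Z) ≤ max_{x ∈ supp(P_X)} E_γ(P_{Z|X=x}, Q_Z), where supp(P_X) := {x : P_X(x) > 0}. -/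
open scoped Classical
open Finset

noncomputable section

/-- The `E_γ` metric: `E_γ(P,Q) = ∑_{a : P a ≥ γ Q a} (P a - γ Q a)`. -/
def Egam {A : Type*} [Fintype A] (γ : ℝ) (P Q : A → ℝ) : ℝ :=
  ∑ a ∈ Finset.univ.filter (fun a => γ * Q a ≤ P a), (P a - γ * Q a)

/-! Proof idea: `E_γ(P, Q) = ∑ₐ (P a - γ Q a)⁺` is a sum of positive parts, so it splits along
the first coordinate of `X × Z` and is positively homogeneous in the pair `(P, Q)`; this gives the
identity. The bound holds because a convex combination with weights `P_X` is at most the largest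
value on the support of `P_X`. -/

theorem Egam_eq_sum_max {A : Type*} [Fintype A] (γ : ℝ) (P Q : A → ℝ) :
    Egam γ P Q = ∑ a, max (P a - γ * Q a) 0 := by
  rw [Egam, sum_filter]
  refine sum_congr rfl fun a _ => ?_
  split_ifs with h
  · exact (max_eq_left (sub_nonneg.mpr h)).symm
  · exact (max_eq_right (sub_nonpos.mpr (not_le.mp h).le)).symm

theorem Egam_mul_left {A : Type*} [Fintype A] (γ : ℝ) (P Q : A → ℝ) {c : ℝ} (hc : 0 ≤ c) :
    Egam γ (fun a => c * P a) (fun a => c * Q a) = c * Egam γ P Q := by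
  simp only [Egam_eq_sum_max, mul_sum]
  refine sum_congr rfl fun a _ => ?_
  rw [mul_max_of_nonneg _ _ hc, mul_zero, mul_sub, mul_left_comm]

theorem Egam_prod {X Z : Type*} [Fintype X] [Fintype Z] (γ : ℝ) (P Q : X × Z → ℝ) :
    Egam γ P Q = ∑ x, Egam γ (fun z => P (x, z)) (fun z => Q (x, z)) := by
  simp only [Egam_eq_sum_max, Fintype.sum_prod_type]

theorem sum_mul_le_csSup_image_pos {ι : Type*} [Fintype ι] {w : ι → ℝ} (hw : IsPMF w)
    (f : ι → ℝ) : ∑ i, w i * f i ≤ sSup (f '' {i | 0 < w i}) := by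
  have hbdd : BddAbove (f '' {i | 0 < w i}) := (Set.toFinite _).bddAbove
  calc ∑ i, w i * f i ≤ ∑ i, w i * sSup (f '' {i | 0 < w i}) := by
        refine sum_le_sum fun i _ => ?_
        rcases (hw.1 i).eq_or_lt with hzero | hpos
        · simp [← hzero]
        · exact mul_le_mul_of_nonneg_left (le_csSup hbdd ⟨i, hpos, rfl⟩) hpos.le
    _ = sSup (f '' {i | 0 < w i}) := by rw [← sum_mul, hw.2, one_mul]

theorem stmt16_general {X Z : Type*} [Fintype X] [Fintype Z]
    (Wch : X → Z → ℝ)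
    (PX : X → ℝ) (hPX : IsPMF PX)
    (QZ : Z → ℝ)
    (γ : ℝ) :
    Egam γ (fun p : X × Z => PX p.1 * Wch p.1 p.2)
        (fun p : X × Z => PX p.1 * QZ p.2)
      = ∑ x, PX x * Egam γ (Wch x) QZ
    ∧ Egam γ (fun p : X × Z => PX p.1 * Wch p.1 p.2)
        (fun p : X × Z => PX p.1 * QZ p.2)
      ≤ sSup ((fun x => Egam γ (Wch x) QZ) '' {x | 0 < PX x}) := by
  have hEq : Egam γ (fun p : X × Z => PX p.1 * Wch p.1 p.2)
      (fun p : X × Z => PX p.1 * QZ p.2) = ∑ x, PX x * Egam γ (Wch x) QZ := by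
    rw [Egam_prod]
    exact sum_congr rfl fun x _ => Egam_mul_left γ (Wch x) QZ (hPX.1 x)
  exact ⟨hEq, hEq ▸ sum_mul_le_csSup_image_pos hPX _⟩

/-- Linearity of `P_X ↦ E_γ(P_X P_{Z|X}, P_X Q_Z)`:
`E_γ(P_X P_{Z|X}, P_X Q_Z) = ∑_x P_X(x) E_γ(P_{Z|X=x}, Q_Z)`, and consequently it
is bounded by the maximum of `E_γ(P_{Z|X=x}, Q_Z)` over the support of `P_X`. -/
theorem stmt16 {X Z : Type*} [Fintype X] [Fintype Z] [Nonempty X] [Nonempty Z]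
    (Wch : X → Z → ℝ) (hW : ∀ x, IsPMF (Wch x))
    (PX : X → ℝ) (hPX : IsPMF PX)
    (QZ : Z → ℝ) (hQZ : IsPMF QZ)
    (γ : ℝ) (hγ : 0 < γ) :
    Egam γ (fun p : X × Z => PX p.1 * Wch p.1 p.2)
        (fun p : X × Z => PX p.1 * QZ p.2)
      = ∑ x, PX x * Egam γ (Wch x) QZ
    ∧ Egam γ (fun p : X × Z => PX p.1 * Wch p.1 p.2)
        (fun p : X × Z => PX p.1 * QZ p.2)
      ≤ sSup ((fun x => Egam γ (Wch x) QZ) '' {x | 0 < PX x}) :=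
  stmt16_general Wch PX hPX QZ γ
end
end
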